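/- Let η : [0, T] → [0, ∞) be nondecreasing and measurable, p ≥ 1, C ≥ 0, and g ≥ 0, and suppose η(t̄) ≤ C ∫_0^{t̄} (t̄ − t)^{p−1} η(t) dt + g for all t̄ ∈ [0, T]. Then η(T) ≤ C' g for a constant C' depending only on C, p, T. -/

import Mathlib

/-- Gronwall inequality with kernel (t̄ − t)^{p−1}: if η : [0,T] → [0,∞) is
nondecreasing, measurable and η(t̄) ≤ C ∫_0^{t̄} (t̄−t)^{p−1} η(t) dt + g on [0,T],
then η(T) ≤ C' g with C' depending only on C, p, T. -/
theorem stmt_13 (p C T : ℝ) (hp : 1 ≤ p) (hC : 0 ≤ C) (hT : 0 < T) :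
    ∃ C' : ℝ, 0 ≤ C' ∧ ∀ (η : ℝ → ℝ) (g : ℝ), Measurable η →
      MonotoneOn η (Set.Icc 0 T) → (∀ t ∈ Set.Icc (0 : ℝ) T, 0 ≤ η t) → 0 ≤ g →
      (∀ tb ∈ Set.Icc (0 : ℝ) T,
        η tb ≤ C * (∫ t in (0 : ℝ)..tb, (tb - t) ^ (p - 1) * η t) + g) →
      η T ≤ C' * g := by
  open MeasureTheory intervalIntegral Set in
  set K : ℝ := C * T ^ (p - 1) with hKdef
  have hTp : (0:ℝ) ≤ T ^ (p - 1) := Real.rpow_nonneg hT.le _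
  have hK : 0 ≤ K := mul_nonneg hC hTp
  set N : ℕ := ⌈2 * K * T⌉₊ + 1 with hNdef
  have hN0 : (0:ℝ) < N := by positivity
  set δ : ℝ := T / N with hδdef
  have hδ0 : 0 < δ := div_pos hT hN0
  have hKδ : K * δ ≤ 1 / 2 := by
    rw [hδdef, ← mul_div_assoc, div_le_div_iff₀ hN0 (by norm_num : (0:ℝ) < 2)]
    have h1 : 2 * K * T ≤ (⌈2 * K * T⌉₊ : ℝ) := Nat.le_ceil _
    have h2 : ((⌈2 * K * T⌉₊ : ℝ)) ≤ N := by
      rw [hNdef]; push_cast; linarith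
    nlinarith
  have hNδ : (N : ℝ) * δ = T := by
    rw [hδdef]; field_simp
  set a : ℝ := 2 * K * T + 2 with hadef
  have ha1 : 1 ≤ a := by nlinarith
  refine ⟨a ^ N, by positivity, ?_⟩
  intro η g hηm hmono hηnn hg hyp
  -- integrability
  have hmeas : ∀ b : ℝ, Measurable (fun t => (b - t) ^ (p - 1) * η t) := fun b =>
    ((measurable_const.sub measurable_id).pow_const _).mul hηm
  have hker : ∀ b t : ℝ, 0 ≤ t → b ≤ T → t ≤ b → (b - t) ^ (p - 1) ≤ T ^ (p - 1) := by
    intro b t ht hb htb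
    exact Real.rpow_le_rpow (by linarith) (by linarith) (by linarith)
  have hint : ∀ b ∈ Icc (0:ℝ) T,
      IntervalIntegrable (fun t => (b - t) ^ (p - 1) * η t) volume 0 b := by
    intro b hb
    rw [intervalIntegrable_iff_integrableOn_Ioc_of_le hb.1]
    refine Integrable.mono' (g := fun _ => T ^ (p - 1) * η T)
      (integrableOn_const measure_Ioc_lt_top.ne) (hmeas b).aestronglyMeasurable ?_
    filter_upwards [ae_restrict_mem measurableSet_Ioc] with t ht
    have ht0 : (0:ℝ) ≤ t := ht.1.le
    have htT : t ≤ T := ht.2.trans hb.2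
    have hηt : 0 ≤ η t := hηnn t ⟨ht0, htT⟩
    have hηtT : η t ≤ η T := hmono ⟨ht0, htT⟩ ⟨hT.le, le_refl T⟩ htT
    rw [Real.norm_eq_abs, abs_of_nonneg (mul_nonneg (Real.rpow_nonneg (by linarith [ht.2]) _) hηt)]
    exact mul_le_mul (hker b t ht0 hb.2 ht.2) hηtT hηt hTp
  -- key integral bound
  have key : ∀ c b : ℝ, 0 ≤ c → c ≤ b → b ≤ T →
      (∫ t in (0:ℝ)..b, (b - t) ^ (p - 1) * η t)
        ≤ T ^ (p - 1) * (c * η c) + T ^ (p - 1) * ((b - c) * η b) := by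
    intro c b hc hcb hbT
    have hb0 : (0:ℝ) ≤ b := hc.trans hcb
    have hbI : b ∈ Icc (0:ℝ) T := ⟨hb0, hbT⟩
    have hI := hint b hbI
    have hI1 : IntervalIntegrable (fun t => (b - t) ^ (p - 1) * η t) volume 0 c :=
      hI.mono_set (by rw [Set.uIcc_of_le hc, Set.uIcc_of_le hb0]; exact Set.Icc_subset_Icc_right hcb)
    have hI2 : IntervalIntegrable (fun t => (b - t) ^ (p - 1) * η t) volume c b :=
      hI.mono_set (by rw [Set.uIcc_of_le hcb, Set.uIcc_of_le hb0]; exact Set.Icc_subset_Icc_left hc)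
    rw [← intervalIntegral.integral_add_adjacent_intervals hI1 hI2]
    have b1 : (∫ t in (0:ℝ)..c, (b - t) ^ (p - 1) * η t) ≤ T ^ (p - 1) * (c * η c) := by
      calc (∫ t in (0:ℝ)..c, (b - t) ^ (p - 1) * η t)
          ≤ ∫ _ in (0:ℝ)..c, T ^ (p - 1) * η c := by
            refine intervalIntegral.integral_mono_on hc hI1 intervalIntegrable_const ?_
            intro t ht
            have hηt : 0 ≤ η t := hηnn t ⟨ht.1, le_trans (le_trans ht.2 hcb) hbT⟩
            have : η t ≤ η c := hmono ⟨ht.1, le_trans (le_trans ht.2 hcb) hbT⟩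
              ⟨hc, le_trans hcb hbT⟩ ht.2
            exact mul_le_mul (hker b t ht.1 hbT (le_trans ht.2 hcb)) this hηt hTp
        _ = T ^ (p - 1) * (c * η c) := by
            rw [intervalIntegral.integral_const]; ring_nf
    have b2 : (∫ t in c..b, (b - t) ^ (p - 1) * η t) ≤ T ^ (p - 1) * ((b - c) * η b) := by
      calc (∫ t in c..b, (b - t) ^ (p - 1) * η t)
          ≤ ∫ _ in c..b, T ^ (p - 1) * η b := by
            refine intervalIntegral.integral_mono_on hcb hI2 intervalIntegrable_const ?_
            intro t ht
            have ht0 : (0:ℝ) ≤ t := hc.trans ht.1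
            have hηt : 0 ≤ η t := hηnn t ⟨ht0, ht.2.trans hbT⟩
            have : η t ≤ η b := hmono ⟨ht0, ht.2.trans hbT⟩ ⟨hb0, hbT⟩ ht.2
            exact mul_le_mul (hker b t ht0 hbT ht.2) this hηt hTp
        _ = T ^ (p - 1) * ((b - c) * η b) := by
            rw [intervalIntegral.integral_const]; rw [smul_eq_mul]; ring
    linarith
  -- main induction
  have main : ∀ j : ℕ, j ≤ N → η (j * δ) ≤ a ^ j * g := by
    intro j
    induction j with
    | zero =>
      intro _
      simpa using (by simpa using hyp 0 ⟨le_refl 0, hT.le⟩ : η 0 ≤ g)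
    | succ j ih =>
      intro hjN
      have hj : j ≤ N := Nat.le_of_succ_le hjN
      have ihj := ih hj
      set tj : ℝ := j * δ with htjdef
      set tb : ℝ := (j + 1 : ℕ) * δ with htbdef
      have htj0 : 0 ≤ tj := by positivity
      have htjtb : tj ≤ tb := by
        rw [htjdef, htbdef]; push_cast
        nlinarith [hδ0.le]
      have htbT : tb ≤ T := by
        rw [htbdef, ← hNδ]
        have : ((j + 1 : ℕ) : ℝ) ≤ (N : ℝ) := by exact_mod_cast hjN
        nlinarith [hδ0.le]
      have htbI : tb ∈ Icc (0:ℝ) T := ⟨htj0.trans htjtb, htbT⟩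
      have h1 := hyp tb htbI
      have h2 := key tj tb htj0 htjtb htbT
      have hηtb : 0 ≤ η tb := hηnn tb htbI
      have hηtj : 0 ≤ η tj := hηnn tj ⟨htj0, htjtb.trans htbT⟩
      have hδeq : tb - tj = δ := by rw [htjdef, htbdef]; push_cast; ring
      have h3 : η tb ≤ K * (tj * η tj) + K * (δ * η tb) + g := by
        have := mul_le_mul_of_nonneg_left h2 hC
        rw [hδeq] at h2
        calc η tb ≤ C * (∫ t in (0:ℝ)..tb, (tb - t) ^ (p - 1) * η t) + g := h1
          _ ≤ C * (T ^ (p - 1) * (tj * η tj) + T ^ (p - 1) * (δ * η tb)) + g := by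
              have := mul_le_mul_of_nonneg_left h2 hC; linarith
          _ = K * (tj * η tj) + K * (δ * η tb) + g := by rw [hKdef]; ring
      have htjT : tj ≤ T := htjtb.trans htbT
      have h4 : K * (δ * η tb) ≤ (1/2) * η tb := by
        rw [← mul_assoc]; exact mul_le_mul_of_nonneg_right hKδ hηtb
      have h5 : K * (tj * η tj) ≤ K * T * η tj := by
        rw [mul_assoc K T]
        exact mul_le_mul_of_nonneg_left (mul_le_mul_of_nonneg_right htjT hηtj) hK
      have h6 : η tb ≤ 2 * K * T * η tj + 2 * g := by linarith
      have haj : (1:ℝ) ≤ a ^ j := one_le_pow₀ ha1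
      have hKT : (0:ℝ) ≤ 2 * K * T := by positivity
      have s1 : 2 * K * T * η tj ≤ 2 * K * T * (a ^ j * g) :=
        mul_le_mul_of_nonneg_left ihj hKT
      have s2 : g ≤ a ^ j * g := le_mul_of_one_le_left hg haj
      calc η tb ≤ 2 * K * T * (a ^ j * g) + 2 * (a ^ j * g) := by linarith
        _ = a ^ (j + 1) * g := by rw [hadef]; ring
  have := main N (le_refl N)
  rwa [hNδ] at this
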